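/- Let T > 0 and let g : ℝ × ℝ → [0, ∞] be measurable with g(s,t) = 0 whenever (s,t) ∉ [0,T] × [0,T]. For θ > 0 define f_θ(s) = sup { g(s,t) : t ∈ [s, s+θ] ∩ [0,T] } (with the convention f_θ(s) = 0 when [s, s+θ] ∩ [0,T] = ∅). Assume that each f_θ is measurable, that f_θ(s) < ∞ for a.e. s ∈ [0,T] for every θ > 0, and that ∫₀^T f_θ(s) ds → 0 as θ → 0⁺. Then there exists a sequence of positive numbers θ_n → 0⁺ such that for almost every τ ∈ [0,T]: lim_{n→∞} (1/θ_n²) ∫_τ^{τ+θ_n} ∫_τ^t g(s,t) ds dt = 0. (This is Lemma 4.1 of the paper in abstract form: for a process φ ∈ 𝕃^{1,2}_{2,𝔽}(H̃) one takes g(s,t) = 𝔼|D_s φ(t) − ∇φ(s)|²_{H̃}, and membership in 𝕃^{1,2}_{2,𝔽} supplies exactly the stated hypotheses on g.) -/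

import Mathlib

open MeasureTheory Filter Set
open scoped ENNReal

private lemma ind_eq (θ τ s : ℝ) (h : ℝ → ℝ≥0∞) :
    (Icc τ (τ + θ)).indicator h s = (Icc (s - θ) s).indicator (fun _ => h s) τ := by
  simp only [Set.indicator_apply, Set.mem_Icc]
  have hiff : (τ ≤ s ∧ s ≤ τ + θ) ↔ (s - θ ≤ τ ∧ τ ≤ s) := by
    constructor <;> rintro ⟨h1, h2⟩ <;> constructor <;> linarith
  exact if_congr hiff rfl rfl

private lemma ind_meas (θ : ℝ) (h : ℝ → ℝ≥0∞) (hm : Measurable h) :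
    Measurable (Function.uncurry fun τ s => (Icc τ (τ + θ)).indicator h s) := by
  have heq : (Function.uncurry fun τ s => (Icc τ (τ + θ)).indicator h s)
      = Set.indicator {p : ℝ × ℝ | p.1 ≤ p.2 ∧ p.2 ≤ p.1 + θ} (fun p => h p.2) := by
    ext p
    simp only [Function.uncurry, Set.indicator_apply, Set.mem_Icc, Set.mem_setOf_eq]
  rw [heq]
  exact (hm.comp measurable_snd).indicator
    ((measurableSet_le measurable_fst measurable_snd).inter
      (measurableSet_le measurable_snd (measurable_fst.add_const θ)))

private lemma win_meas (θ : ℝ) (h : ℝ → ℝ≥0∞) (hm : Measurable h) :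
    Measurable fun τ => ∫⁻ s in Icc τ (τ + θ), h s := by
  have : (fun τ => ∫⁻ s in Icc τ (τ + θ), h s)
      = fun τ => ∫⁻ s, (Icc τ (τ + θ)).indicator h s := by
    funext τ
    rw [lintegral_indicator measurableSet_Icc _]
  rw [this]
  exact (ind_meas θ h hm).lintegral_prod_right

private lemma swap_aux (θ : ℝ) (hθ : 0 < θ) (h : ℝ → ℝ≥0∞) (hm : Measurable h) :
    ∫⁻ τ, ∫⁻ s in Icc τ (τ + θ), h s = ENNReal.ofReal θ * ∫⁻ s, h s := by
  calc ∫⁻ τ, ∫⁻ s in Icc τ (τ + θ), h s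
      = ∫⁻ τ, ∫⁻ s, (Icc τ (τ + θ)).indicator h s := by
        simp_rw [lintegral_indicator measurableSet_Icc _]
    _ = ∫⁻ s, ∫⁻ τ, (Icc τ (τ + θ)).indicator h s :=
        lintegral_lintegral_swap (ind_meas θ h hm).aemeasurable
    _ = ∫⁻ s, ∫⁻ τ, (Icc (s - θ) s).indicator (fun _ => h s) τ := by
        simp_rw [ind_eq]
    _ = ∫⁻ s, h s * ENNReal.ofReal θ := by
        refine lintegral_congr fun s => ?_
        rw [lintegral_indicator measurableSet_Icc _, setLIntegral_const, Real.volume_Icc]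
        congr 1
        ring
    _ = ENNReal.ofReal θ * ∫⁻ s, h s := by
        rw [lintegral_mul_const' _ _ ENNReal.ofReal_ne_top, mul_comm]

/-- Lemma 4.1 in abstract form: there is a sequence `θ_n → 0⁺` such that for a.e.
`τ ∈ [0,T]`, `lim_{n→∞} (1/θ_n²) ∫_τ^{τ+θ_n} ∫_τ^t g(s,t) ds dt = 0`. -/
theorem stmt_6
    (T : ℝ) (hT : 0 < T)
    (g : ℝ → ℝ → ℝ≥0∞)
    (hg : Measurable (Function.uncurry g))
    (hg0 : ∀ s t : ℝ, (s, t) ∉ Icc (0:ℝ) T ×ˢ Icc (0:ℝ) T → g s t = 0)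
    (f : ℝ → ℝ → ℝ≥0∞)
    (hf_def : ∀ θ s, f θ s = ⨆ t ∈ Icc s (s + θ) ∩ Icc (0:ℝ) T, g s t)
    (hf_meas : ∀ θ > (0:ℝ), Measurable (f θ))
    (hf_fin : ∀ θ > (0:ℝ), ∀ᵐ s ∂(volume.restrict (Icc (0:ℝ) T)), f θ s < ⊤)
    (hf_lim : Tendsto (fun θ : ℝ => ∫⁻ s in Icc (0:ℝ) T, f θ s)
      (nhdsWithin 0 (Ioi 0)) (nhds 0)) :
    ∃ θseq : ℕ → ℝ, (∀ n, 0 < θseq n) ∧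
      Tendsto θseq atTop (nhds 0) ∧
      (∀ᵐ τ ∂(volume.restrict (Icc (0:ℝ) T)),
        Tendsto
          (fun n =>
            (∫⁻ t in Icc τ (τ + θseq n), ∫⁻ s in Icc τ t, g s t) /
              ENNReal.ofReal (θseq n ^ 2))
          atTop (nhds 0)) := by
  -- Step 1: select the sequence
  have hsel : ∀ n : ℕ, ∃ θ : ℝ, (0 < θ ∧ θ < 1 / (n + 1)) ∧
      (∫⁻ s in Icc (0:ℝ) T, f θ s) ≤ (2:ℝ≥0∞)⁻¹ ^ n := by
    intro n
    have hεpos : (0:ℝ≥0∞) < (2:ℝ≥0∞)⁻¹ ^ n :=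
      ENNReal.pow_pos (ENNReal.inv_pos.mpr (by norm_num)) n
    have h1 : ∀ᶠ θ in nhdsWithin (0:ℝ) (Ioi 0),
        (∫⁻ s in Icc (0:ℝ) T, f θ s) ≤ (2:ℝ≥0∞)⁻¹ ^ n :=
      ENNReal.tendsto_nhds_zero.mp hf_lim _ hεpos
    have h2 : ∀ᶠ θ in nhdsWithin (0:ℝ) (Ioi 0), θ ∈ Ioo (0:ℝ) (1 / (n + 1)) :=
      Ioo_mem_nhdsGT (by positivity)
    obtain ⟨θ, hθ1, hθ2⟩ := (h2.and h1).exists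
    exact ⟨θ, ⟨hθ1.1, hθ1.2⟩, hθ2⟩
  choose θseq hθIoo hA using hsel
  have hpos : ∀ n, 0 < θseq n := fun n => (hθIoo n).1
  have hlt : ∀ n, θseq n < 1 / (n + 1) := fun n => (hθIoo n).2
  refine ⟨θseq, hpos, ?_, ?_⟩
  · exact squeeze_zero (fun n => (hpos n).le) (fun n => (hlt n).le)
      tendsto_one_div_add_atTop_nhds_zero_nat
  -- Step 2: the a.e. statement
  -- f θ vanishes outside [0,T]
  have hfvanish : ∀ θ : ℝ, ∀ s : ℝ, s ∉ Icc (0:ℝ) T → f θ s = 0 := by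
    intro θ s hs
    rw [hf_def]
    refine le_antisymm (iSup₂_le fun t ht => ?_) zero_le
    rw [hg0 s t (fun hmem => hs hmem.1)]
  -- the dominating sequence
  set B : ℕ → ℝ → ℝ≥0∞ := fun n τ =>
    (∫⁻ s in Icc τ (τ + θseq n), f (θseq n) s) / ENNReal.ofReal (θseq n) with hB
  have hBmeas : ∀ n, Measurable (B n) := fun n =>
    (win_meas (θseq n) (f (θseq n)) (hf_meas _ (hpos n))).div_const _
  have hne0 : ∀ n, ENNReal.ofReal (θseq n) ≠ 0 :=
    fun n => (ENNReal.ofReal_pos.mpr (hpos n)).ne'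
  -- the total integrals of B n are summable
  have hBint : ∀ n, ∫⁻ τ, B n τ ≤ (2:ℝ≥0∞)⁻¹ ^ n := by
    intro n
    have hf0 : ∫⁻ s, f (θseq n) s = ∫⁻ s in Icc (0:ℝ) T, f (θseq n) s := by
      rw [← lintegral_indicator measurableSet_Icc _]
      refine lintegral_congr fun s => ?_
      by_cases hs : s ∈ Icc (0:ℝ) T
      · rw [Set.indicator_of_mem hs]
      · rw [Set.indicator_of_notMem hs, hfvanish _ _ hs]
    have hswap := swap_aux (θseq n) (hpos n) (f (θseq n)) (hf_meas _ (hpos n))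
    have : ∫⁻ τ, B n τ
        = (∫⁻ τ, ∫⁻ s in Icc τ (τ + θseq n), f (θseq n) s) * (ENNReal.ofReal (θseq n))⁻¹ := by
      simp_rw [hB, div_eq_mul_inv]
      exact lintegral_mul_const' _ _ (by simp [hpos n])
    rw [this, hswap, hf0, mul_right_comm,
      ENNReal.mul_inv_cancel (hne0 n) ENNReal.ofReal_ne_top, one_mul]
    exact hA n
  have htsum : ∫⁻ τ in Icc (0:ℝ) T, ∑' n, B n τ ≠ ⊤ := by
    rw [lintegral_tsum fun n => (hBmeas n).aemeasurable]
    have hle : ∑' n, ∫⁻ τ in Icc (0:ℝ) T, B n τ ≤ ∑' n : ℕ, (2:ℝ≥0∞)⁻¹ ^ n :=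
      ENNReal.tsum_le_tsum fun n => le_trans (setLIntegral_le_lintegral _ _) (hBint n)
    refine ne_top_of_le_ne_top ?_ hle
    rw [ENNReal.tsum_geometric]
    rw [ENNReal.one_sub_inv_two]
    simp
  have hae : ∀ᵐ τ ∂(volume.restrict (Icc (0:ℝ) T)), ∑' n, B n τ ≠ ⊤ := by
    filter_upwards [ae_lt_top (Measurable.ennreal_tsum hBmeas) htsum] with τ h using h.ne
  filter_upwards [hae] with τ hτ
  have hB0 : Tendsto (fun n => B n τ) atTop (nhds 0) :=
    ENNReal.tendsto_atTop_zero_of_tsum_ne_top hτ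
  -- pointwise bound
  have hQB : ∀ n, (∫⁻ t in Icc τ (τ + θseq n), ∫⁻ s in Icc τ t, g s t) /
      ENNReal.ofReal (θseq n ^ 2) ≤ B n τ := by
    intro n
    set θ := θseq n with hθdef
    set C := ∫⁻ s in Icc τ (τ + θ), f θ s with hC
    have hinner : ∀ t ∈ Icc τ (τ + θ), (∫⁻ s in Icc τ t, g s t) ≤ C := by
      intro t ht
      have h1 : (∫⁻ s in Icc τ t, g s t) ≤ ∫⁻ s in Icc τ t, f θ s := by
        refine setLIntegral_mono (hf_meas _ (hpos n)) fun s hs => ?_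
        by_cases htT : t ∈ Icc (0:ℝ) T
        · rw [hf_def]
          refine le_biSup (fun t => g s t) ?_
          exact ⟨⟨hs.2, by have := hs.1; have := ht.2; linarith⟩, htT⟩
        · rw [hg0 s t (fun hmem => htT hmem.2)]
          exact zero_le
      exact h1.trans (lintegral_mono_set (Icc_subset_Icc_right ht.2))
    have houter : (∫⁻ t in Icc τ (τ + θ), ∫⁻ s in Icc τ t, g s t)
        ≤ C * ENNReal.ofReal θ := by
      calc (∫⁻ t in Icc τ (τ + θ), ∫⁻ s in Icc τ t, g s t)
          ≤ ∫⁻ _ in Icc τ (τ + θ), C := setLIntegral_mono measurable_const hinner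
        _ = C * volume (Icc τ (τ + θ)) := setLIntegral_const _ _
        _ = C * ENNReal.ofReal θ := by rw [Real.volume_Icc, add_sub_cancel_left]
    have hsq : ENNReal.ofReal (θ ^ 2) = ENNReal.ofReal θ * ENNReal.ofReal θ := by
      rw [sq, ENNReal.ofReal_mul (hpos n).le]
    calc (∫⁻ t in Icc τ (τ + θ), ∫⁻ s in Icc τ t, g s t) / ENNReal.ofReal (θ ^ 2)
        ≤ (C * ENNReal.ofReal θ) / (ENNReal.ofReal θ * ENNReal.ofReal θ) := by
          rw [hsq]; exact ENNReal.div_le_div_right houter _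
      _ = C / ENNReal.ofReal θ :=
          ENNReal.mul_div_mul_right _ _ (hne0 n) ENNReal.ofReal_ne_top
      _ = B n τ := rfl
  exact tendsto_of_tendsto_of_tendsto_of_le_of_le tendsto_const_nhds hB0
    (fun n => zero_le) hQB
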